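/- Let f_1,...,f_n and g_1,...,g_n be integrable functions on ℝ such that each product f_j·g_k is integrable, and let M be the n×n matrix with entries m_{j,k} = ∫ f_j(x) g_k(x) dx. Then det M = (1/n!) ∫...∫ det[f_j(x_k)]_{j,k=1..n} · det[g_j(x_k)]_{j,k=1..n} dx_1...dx_n (generalized Cauchy–Binet / Andréief identity). -/

import Mathlib

/-!
Expanding both determinants by the Leibniz formula writes `det[f_j(x_k)] · det[g_j(x_k)]` as a
signed sum over pairs of permutations `(σ, τ)` of the products `∏_k f_{σ k}(x_k) g_{τ k}(x_k)`.
By Fubini each such product integrates to `∏_k m_{σ k, τ k}`, and for fixed `σ` the signed sum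
over `τ` is the determinant of `M` with its rows permuted by `σ`, i.e. `sign σ · det M`.
Each of the `n!` permutations `σ` therefore contributes exactly `det M`.
-/

open MeasureTheory Matrix Equiv

namespace Matrix

variable {ι R : Type*} [Fintype ι] [DecidableEq ι] [CommRing R]

theorem det_mul_det_eq_sum_perm_sum_perm (A B : Matrix ι ι R) :
    A.det * B.det = ∑ σ : Perm ι, ∑ τ : Perm ι,
      ((Perm.sign σ : ℤ) : R) * ((Perm.sign τ : ℤ) : R) * ∏ k, (A (σ k) k * B (τ k) k) := by
  rw [det_apply', det_apply', Finset.sum_mul_sum]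
  refine Finset.sum_congr rfl fun σ _ => Finset.sum_congr rfl fun τ _ => ?_
  rw [Finset.prod_mul_distrib]
  ring

theorem sum_sign_mul_prod_perm_eq_sign_mul_det (M : Matrix ι ι R) (σ : Perm ι) :
    ∑ τ : Perm ι, ((Perm.sign τ : ℤ) : R) * ∏ k, M (σ k) (τ k) =
      ((Perm.sign σ : ℤ) : R) * M.det := by
  rw [← det_permute, ← det_transpose, det_apply']
  rfl

theorem sum_perm_sum_perm_sign_mul_prod_eq_factorial_mul_det (M : Matrix ι ι R) :
    ∑ σ : Perm ι, ∑ τ : Perm ι,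
      ((Perm.sign σ : ℤ) : R) * ((Perm.sign τ : ℤ) : R) * ∏ k, M (σ k) (τ k) =
      ((Fintype.card ι).factorial : R) * M.det := by
  have hsign (σ : Perm ι) : ((Perm.sign σ : ℤ) : R) * ((Perm.sign σ : ℤ) : R) = 1 := by
    rw [← Int.cast_mul, ← Units.val_mul, Int.units_mul_self, Units.val_one, Int.cast_one]
  simp_rw [mul_assoc, ← Finset.mul_sum, sum_sign_mul_prod_perm_eq_sign_mul_det, ← mul_assoc,
    hsign, one_mul, Finset.sum_const, Finset.card_univ, Fintype.card_perm, nsmul_eq_mul]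

end Matrix

theorem integral_det_mul_det {ι α 𝕜 : Type*} [Fintype ι] [DecidableEq ι] [RCLike 𝕜]
    [MeasurableSpace α] (μ : Measure α) [SigmaFinite μ] (f g : ι → α → 𝕜)
    (hfg : ∀ j k, Integrable (fun a => f j a * g k a) μ) :
    ∫ x, (of fun j k => f j (x k)).det * (of fun j k => g j (x k)).det
        ∂(Measure.pi fun _ => μ) =
      ((Fintype.card ι).factorial : 𝕜) * (of fun j k => ∫ a, f j a * g k a ∂μ).det := by
  have hint (σ τ : Perm ι) :
      Integrable (fun x : ι → α => ∏ k, (f (σ k) (x k) * g (τ k) (x k)))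
        (Measure.pi fun _ => μ) :=
    Integrable.fintype_prod fun k => hfg (σ k) (τ k)
  simp_rw [det_mul_det_eq_sum_perm_sum_perm, of_apply]
  rw [← sum_perm_sum_perm_sign_mul_prod_eq_factorial_mul_det, integral_finsetSum _ fun σ _ =>
    integrable_finsetSum _ fun τ _ => (hint σ τ).const_mul _]
  refine Finset.sum_congr rfl fun σ _ => ?_
  rw [integral_finsetSum _ fun τ _ => (hint σ τ).const_mul _]
  refine Finset.sum_congr rfl fun τ _ => ?_
  rw [integral_const_mul, integral_fintype_prod_eq_prod (fun k a => f (σ k) a * g (τ k) a)]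
  rfl

/-- Andréief / generalized Cauchy–Binet identity: the determinant of the matrix of
cross-integrals `∫ f_j g_k` equals `1/n!` times the multiple integral over `ℝ^n` of the
product of the two determinants `det[f_j(x_k)]` and `det[g_j(x_k)]`. -/
theorem andreief_identity (n : ℕ) (f g : Fin n → ℝ → ℝ)
    (hfg : ∀ j k : Fin n, Integrable (fun x : ℝ => f j x * g k x)) :
    Matrix.det (Matrix.of fun j k : Fin n => ∫ x : ℝ, f j x * g k x) =
      (1 / (Nat.factorial n : ℝ)) *
        ∫ x : Fin n → ℝ,
          Matrix.det (Matrix.of fun j k : Fin n => f j (x k)) *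
          Matrix.det (Matrix.of fun j k : Fin n => g j (x k)) := by
  rw [volume_pi, integral_det_mul_det volume f g hfg, Fintype.card_fin, one_div,
    inv_mul_cancel_left₀ (by positivity)]
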